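/- Fix 0 ≤ β < 1. With tilde_c_j^β = sum_{i=0}^{j} tilde_r_i β^i tilde_r_{j-i} and r_j, c_j^β as above, for every k ≥ 1: r_k (1-β) ≤ sum over j from 0 to k of tilde_c_j^β ≤ c_k^β (1-β), where c_k^β = sum_{j=0}^{k} β^{k-j} r_j r_{k-j}. -/

import Mathlib

/-! Let `R`, `T`, `D` be the generating series of `r`, `tr` and of the gaps
`d j = r j - r (j + 1) ≥ 0`. Then `T = (1 - X) R = 1 - X D` and `(1 - X) R² = 1`, so `X D R = R - 1`:
the convolution of `d` and `r` is `m ↦ r (m + 1)`. The partial sums of `tc β` are the coefficients of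
`T(βX) T(X) / (1 - X) = T(βX) R(X)`. Writing this as `R - βX D(βX) R` and bounding `β^i ≤ 1` in
the convolution gives the lower bound; writing it as `(1 - βX) R(βX) R` gives `c (m + 1) - β c m`,
and `c (m + 1) ≤ c m` follows from `β^m ≤ β^i` in the coefficient `m + 1` of `(1 - X) R(βX) R`.
-/

/-- Generalized binomial coefficient `binom(x, k) = x(x-1)⋯(x-k+1)/k!`. -/
noncomputable def gbinom (x : ℝ) (k : ℕ) : ℝ :=
  (∏ i ∈ Finset.range k, (x - i)) / (Nat.factorial k)

noncomputable def r (j : ℕ) : ℝ := (Nat.choose (2*j) j : ℝ) / 4^j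

noncomputable def tr (j : ℕ) : ℝ := (-1)^j * gbinom (1/2) j

noncomputable def tc (β : ℝ) (j : ℕ) : ℝ :=
  ∑ i ∈ Finset.range (j + 1), tr i * β^i * tr (j - i)

noncomputable def c (β : ℝ) (k : ℕ) : ℝ :=
  ∑ j ∈ Finset.range (k + 1), β^(k - j) * r j * r (k - j)

open PowerSeries

section Nonneg

variable {R : Type*} [CommSemiring R] [PartialOrder R] [IsOrderedRing R] {β : R} {f g : R⟦X⟧}

lemma coeff_rescale_mul_le (hβ0 : 0 ≤ β) (hβ1 : β ≤ 1) (hf : ∀ n, 0 ≤ coeff n f)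
    (hg : ∀ n, 0 ≤ coeff n g) (n : ℕ) : coeff n (rescale β f * g) ≤ coeff n (f * g) := by
  simp only [coeff_mul, coeff_rescale, mul_assoc]
  exact Finset.sum_le_sum fun p _ =>
    mul_le_of_le_one_left (mul_nonneg (hf _) (hg _)) (pow_le_one₀ hβ0 hβ1)

lemma pow_mul_coeff_mul_le_coeff_rescale_mul (hβ0 : 0 ≤ β) (hβ1 : β ≤ 1)
    (hf : ∀ n, 0 ≤ coeff n f) (hg : ∀ n, 0 ≤ coeff n g) (n : ℕ) :
    β ^ n * coeff n (f * g) ≤ coeff n (rescale β f * g) := by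
  simp only [coeff_mul, coeff_rescale, Finset.mul_sum, mul_assoc]
  exact Finset.sum_le_sum fun p hp => mul_le_mul_of_nonneg_right
    (pow_le_pow_of_le_one hβ0 hβ1 (Finset.HasAntidiagonal.antidiagonal.fst_le hp))
    (mul_nonneg (hf _) (hg _))

end Nonneg

lemma coeff_mul_mk_one {R : Type*} [CommSemiring R] (f : R⟦X⟧) (k : ℕ) :
    coeff k (f * mk 1) = ∑ j ∈ Finset.range (k + 1), coeff j f := by
  simp [coeff_mul, Finset.Nat.sum_antidiagonal_eq_sum_range_succ_mk]

lemma r_zero : r 0 = 1 := by simp [r]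

lemma r_pos (j : ℕ) : 0 < r j := by
  unfold r
  have := Nat.choose_pos (Nat.le_mul_of_pos_left j two_pos)
  positivity

lemma r_succ (j : ℕ) : r (j + 1) = (2 * j + 1) / (2 * j + 2) * r j := by
  have h := Nat.succ_mul_centralBinom_succ j
  simp only [Nat.centralBinom] at h
  have h' : ((j : ℝ) + 1) * (2 * (j + 1)).choose (j + 1)
      = 2 * (2 * j + 1) * (2 * j).choose j := by
    exact_mod_cast h
  unfold r
  field_simp
  rw [pow_succ]
  linear_combination 2 * (4 : ℝ) ^ j * h'

lemma r_succ_le (j : ℕ) : r (j + 1) ≤ r j := by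
  rw [r_succ]
  exact mul_le_of_le_one_left (r_pos j).le
    ((div_le_one (by positivity)).2 (by linarith))

noncomputable def rDiff (j : ℕ) : ℝ := r j - r (j + 1)

lemma rDiff_nonneg (j : ℕ) : 0 ≤ rDiff j := sub_nonneg.2 (r_succ_le j)

lemma gbinom_succ (x : ℝ) (k : ℕ) : gbinom x (k + 1) = gbinom x k * (x - k) / (k + 1) := by
  unfold gbinom
  rw [Finset.prod_range_succ, Nat.factorial_succ]
  push_cast
  field_simp

lemma tr_zero : tr 0 = 1 := by simp [tr, gbinom]

lemma tr_succ (j : ℕ) : tr (j + 1) = -rDiff j := by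
  have tr_succ_eq (j : ℕ) : tr (j + 1) = tr j * (j - 1 / 2) / (j + 1) := by
    simp only [tr, gbinom_succ]
    ring
  unfold rDiff
  induction j with
  | zero => rw [tr_succ_eq, tr_zero, r_succ, r_zero]; norm_num
  | succ n ih =>
    rw [tr_succ_eq, ih, r_succ (n + 1), r_succ n]
    push_cast
    field_simp
    ring

lemma one_sub_X_mul_mk_r_sq : (1 - X) * mk r ^ 2 = 1 := by
  -- `mk r` is `(1 - X)^(-1/2)`: it solves `2 (1 - X) R' = R`, so `(1 - X) R²` has derivative zero.
  have hR : 2 * ((1 - X) * d⁄dX ℝ (mk r)) = mk r := by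
    ext n
    rw [show (2 : ℝ⟦X⟧) = C 2 from (map_ofNat C 2).symm, coeff_C_mul, sub_mul, one_mul,
      map_sub]
    cases n with
    | zero =>
      rw [coeff_zero_X_mul, coeff_derivative, coeff_mk, coeff_mk, r_succ, r_zero]
      norm_num
    | succ n =>
      rw [coeff_succ_X_mul, coeff_derivative, coeff_derivative, coeff_mk, coeff_mk,
        r_succ (n + 1)]
      push_cast
      field_simp
      ring
  apply derivative.ext
  · rw [Derivation.leibniz, derivative_pow, derivative_one, map_sub, derivative_X,
      Derivation.map_one_eq_zero]
    simp only [smul_eq_mul]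
    linear_combination mk r * hR
  · simp [r_zero]

lemma mk_tr_eq_one_sub_X_mul : mk tr = (1 - X) * mk r := by
  ext (_ | n)
  · simp [tr_zero, r_zero]
  · rw [sub_mul, one_mul, map_sub, coeff_succ_X_mul]
    simp [tr_succ, rDiff]

lemma mk_tr_eq_one_sub : mk tr = 1 - X * mk rDiff := by
  ext (_ | n)
  · simp [tr_zero]
  · simp [tr_succ, coeff_succ_X_mul]

lemma X_mul_mk_rDiff_mul_mk_r : X * mk rDiff * mk r = mk r - 1 := by
  linear_combination
    mk r * mk_tr_eq_one_sub - one_sub_X_mul_mk_r_sq - mk r * mk_tr_eq_one_sub_X_mul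

lemma coeff_mk_rDiff_mul_mk_r (m : ℕ) : coeff m (mk rDiff * mk r) = r (m + 1) := by
  simpa [mul_assoc, coeff_succ_X_mul] using congrArg (coeff (m + 1)) X_mul_mk_rDiff_mul_mk_r

lemma tc_eq_coeff (β : ℝ) (j : ℕ) : tc β j = coeff j (rescale β (mk tr) * mk tr) := by
  simp only [tc, coeff_mul, Finset.Nat.sum_antidiagonal_eq_sum_range_succ_mk, coeff_rescale,
    coeff_mk]
  exact Finset.sum_congr rfl fun _ _ => by ring

lemma c_eq_coeff (β : ℝ) (k : ℕ) : c β k = coeff k (mk r * rescale β (mk r)) := by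
  simp only [c, coeff_mul, Finset.Nat.sum_antidiagonal_eq_sum_range_succ_mk, coeff_rescale,
    coeff_mk]
  exact Finset.sum_congr rfl fun _ _ => by ring

lemma sum_tc_eq_coeff (β : ℝ) (k : ℕ) :
    ∑ j ∈ Finset.range (k + 1), tc β j = coeff k (rescale β (mk tr) * mk r) := by
  have h : mk tr * mk 1 = mk r := by
    rw [mk_tr_eq_one_sub_X_mul, mul_right_comm, mul_comm (1 - X), mk_one_mul_one_sub_eq_one,
      one_mul]
  simp only [tc_eq_coeff, ← coeff_mul_mk_one, mul_assoc, h]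

lemma sum_tc_eq_r_sub (β : ℝ) (m : ℕ) :
    ∑ j ∈ Finset.range (m + 2), tc β j
      = r (m + 1) - β * coeff m (rescale β (mk rDiff) * mk r) := by
  rw [sum_tc_eq_coeff, mk_tr_eq_one_sub, map_sub (rescale β), map_one, map_mul (rescale β),
    rescale_X,
    show (1 - C β * X * rescale β (mk rDiff)) * mk r
      = mk r - X * (C β * (rescale β (mk rDiff) * mk r)) by ring,
    map_sub, coeff_succ_X_mul, coeff_C_mul, coeff_mk]

lemma sum_tc_eq_c_sub (β : ℝ) (m : ℕ) :
    ∑ j ∈ Finset.range (m + 2), tc β j = c β (m + 1) - β * c β m := by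
  rw [sum_tc_eq_coeff, mk_tr_eq_one_sub_X_mul, map_mul (rescale β), map_sub (rescale β), map_one,
    rescale_X, c_eq_coeff, c_eq_coeff, show (1 - C β * X) * rescale β (mk r) * mk r
      = mk r * rescale β (mk r) - X * (C β * (mk r * rescale β (mk r))) by ring,
    map_sub, coeff_succ_X_mul, coeff_C_mul]

lemma c_succ_le (β : ℝ) (hβ0 : 0 ≤ β) (hβ1 : β ≤ 1) (m : ℕ) : c β (m + 1) ≤ c β m := by
  have hdiff : c β (m + 1) - c β m
      = β ^ (m + 1) * r (m + 1) - coeff m (rescale β (mk r) * mk rDiff) := by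
    rw [c_eq_coeff, c_eq_coeff, ← coeff_succ_X_mul m, ← map_sub, ← one_sub_mul, ← mul_assoc,
      ← mk_tr_eq_one_sub_X_mul, mk_tr_eq_one_sub,
      show (1 - X * mk rDiff) * rescale β (mk r)
        = rescale β (mk r) - X * (rescale β (mk r) * mk rDiff) by ring,
      map_sub, coeff_succ_X_mul, coeff_rescale, coeff_mk]
  have hcomp := pow_mul_coeff_mul_le_coeff_rescale_mul hβ0 hβ1 (f := mk r) (g := mk rDiff)
    (fun n => by simpa using (r_pos n).le) (fun n => by simpa using rDiff_nonneg n) m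
  rw [mul_comm (mk r), coeff_mk_rDiff_mul_mk_r] at hcomp
  have hpow : β ^ (m + 1) ≤ β ^ m := pow_le_pow_of_le_one hβ0 hβ1 m.le_succ
  nlinarith [r_pos (m + 1)]

theorem stmt_12 (β : ℝ) (hβ0 : 0 ≤ β) (hβ1 : β < 1) (k : ℕ) (hk : 1 ≤ k) :
    r k * (1 - β) ≤ ∑ j ∈ Finset.range (k + 1), tc β j ∧
      ∑ j ∈ Finset.range (k + 1), tc β j ≤ c β k * (1 - β) := by
  obtain ⟨m, rfl⟩ : ∃ m, k = m + 1 := ⟨k - 1, by omega⟩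
  constructor
  · have h := coeff_rescale_mul_le hβ0 hβ1.le (f := mk rDiff) (g := mk r)
      (fun n => by simpa using rDiff_nonneg n) (fun n => by simpa using (r_pos n).le) m
    rw [coeff_mk_rDiff_mul_mk_r] at h
    rw [sum_tc_eq_r_sub]
    nlinarith
  · rw [sum_tc_eq_c_sub]
    nlinarith [c_succ_le β hβ0 hβ1.le m]
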